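/- Let G be a finite simple graph with an injective, nonnegative edge weight function w, and let M be the output of the iterated local max algorithm (run until no edges remain). Then M is a 1/2-approximation of the maximum weight matching: for every matching M' of G, Σ_{e ∈ M'} w(e) ≤ 2 · Σ_{f ∈ M} w(f). -/

import Mathlib

/-!
Every edge `e` of `G` is eventually deleted by the algorithm, namely in the first round in which
a locally maximal edge `f` touching it appears; then `f ∈ M` and `w e ≤ w f`. Charge `e` to `f`.
Since `f` has two endpoints and the edges of a matching `M'` are disjoint, at most two edges of
`M'` are charged to each `f ∈ M`, which gives `∑_{M'} w ≤ 2 ∑_M w`.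
-/

/-- Two edges of a graph share an endpoint. -/
def shareEndpoint {V : Type*} (e f : Sym2 V) : Prop := ∃ v, v ∈ e ∧ v ∈ f

/-- An edge `e` of the subgraph with edge set `E` is locally maximal in it:
`e ∈ E` and `w e > w f` for every other edge `f ∈ E` sharing an endpoint with `e`. -/
def locMaxIn {V : Type*} (w : Sym2 V → ℝ) (E : Set (Sym2 V)) (e : Sym2 V) : Prop :=
  e ∈ E ∧ ∀ f ∈ E, f ≠ e → shareEndpoint e f → w f < w e

/-- One round of the local max algorithm: remove every edge sharing an endpoint with
some locally maximal edge (including the locally maximal edges themselves). -/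
def stepSet {V : Type*} (w : Sym2 V → ℝ) (E : Set (Sym2 V)) : Set (Sym2 V) :=
  {f ∈ E | ¬ ∃ e, locMaxIn w E e ∧ shareEndpoint e f}

/-- The edge set of the graph `G_i` after `i` rounds of the local max algorithm. -/
def Eseq {V : Type*} (G : SimpleGraph V) (w : Sym2 V → ℝ) : ℕ → Set (Sym2 V)
  | 0 => G.edgeSet
  | n + 1 => stepSet w (Eseq G w n)

/-- The set `M_i` of edges matched in round `i`: the locally maximal edges of `G_i`. -/
def Mi {V : Type*} (G : SimpleGraph V) (w : Sym2 V → ℝ) (i : ℕ) : Set (Sym2 V) :=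
  {e | locMaxIn w (Eseq G w i) e}

open Finset

theorem Finset.sum_le_mul_sum_of_card_fiber_le {ι κ R : Type*} [DecidableEq κ] [Semiring R]
    [PartialOrder R] [IsOrderedRing R] {s : Finset ι} {t : Finset κ} {f : ι → R} {g : κ → R}
    {φ : ι → κ} {n : ℕ}
    (hφ : ∀ i ∈ s, φ i ∈ t) (hfg : ∀ i ∈ s, f i ≤ g (φ i))
    (hcard : ∀ j ∈ t, #{i ∈ s | φ i = j} ≤ n) (hg : ∀ j ∈ t, 0 ≤ g j) :
    ∑ i ∈ s, f i ≤ n * ∑ j ∈ t, g j := by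
  calc ∑ i ∈ s, f i
      ≤ ∑ i ∈ s, g (φ i) := sum_le_sum hfg
    _ = ∑ j ∈ t, #{i ∈ s | φ i = j} * g j := by
        rw [← sum_fiberwise_of_maps_to' hφ]
        simp only [sum_const, nsmul_eq_mul]
    _ ≤ ∑ j ∈ t, n * g j :=
        sum_le_sum fun j hj => mul_le_mul_of_nonneg_right (Nat.mono_cast (hcard j hj)) (hg j hj)
    _ = n * ∑ j ∈ t, g j := (mul_sum _ _ _).symm

section Matching

variable {V : Type*} {s : Finset (Sym2 V)}

theorem shareEndpoint_self (e : Sym2 V) : shareEndpoint e e := by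
  induction e using Sym2.ind with
  | _ a b => exact ⟨a, Sym2.mem_mk_left a b, Sym2.mem_mk_left a b⟩

theorem card_filter_mem_le_one [DecidableEq V]
    (hs : (s : Set (Sym2 V)).Pairwise (¬ shareEndpoint · ·)) (v : V) :
    #{e ∈ s | v ∈ e} ≤ 1 := by
  refine card_le_one.2 fun e he f hf => ?_
  rw [mem_filter] at he hf
  by_contra hne
  exact hs he.1 hf.1 hne ⟨v, he.2, hf.2⟩

theorem card_le_two_of_forall_shareEndpoint
    (hs : (s : Set (Sym2 V)).Pairwise (¬ shareEndpoint · ·)) (f : Sym2 V)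
    (hf : ∀ e ∈ s, shareEndpoint f e) : #s ≤ 2 := by
  classical
  induction f using Sym2.ind with
  | _ u v =>
  have hcover : s ⊆ {e ∈ s | u ∈ e} ∪ {e ∈ s | v ∈ e} := by
    intro e he
    obtain ⟨x, hx, hxe⟩ := hf e he
    rcases Sym2.mem_iff.1 hx with rfl | rfl <;> simp [he, hxe]
  calc #s ≤ #{e ∈ s | u ∈ e} + #{e ∈ s | v ∈ e} :=
        (card_le_card hcover).trans (card_union_le _ _)
    _ ≤ 2 := by
        have := card_filter_mem_le_one hs u
        have := card_filter_mem_le_one hs v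
        omega

end Matching

section LocalMax

variable {V : Type*} {w : Sym2 V → ℝ} {E : Set (Sym2 V)}

theorem exists_locMaxIn (hE : E.Finite) (hne : E.Nonempty) (hinj : E.InjOn w) :
    ∃ e, locMaxIn w E e := by
  obtain ⟨e, he, hmax⟩ := Set.exists_max_image E w hE hne
  exact ⟨e, he, fun f hf hfe _ => (hmax f hf).lt_of_ne fun h => hfe (hinj hf he h)⟩

theorem stepSet_subset : stepSet w E ⊆ E := Set.sep_subset _ _

theorem stepSet_ssubset (hE : E.Finite) (hne : E.Nonempty) (hinj : E.InjOn w) :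
    stepSet w E ⊂ E := by
  obtain ⟨e, he⟩ := exists_locMaxIn hE hne hinj
  exact Set.ssubset_iff_subset_ne.2 ⟨stepSet_subset,
    fun h => (h.ge he.1).2 ⟨e, he, shareEndpoint_self e⟩⟩

theorem exists_locMaxIn_le_of_mem_diff_stepSet {e : Sym2 V} (he : e ∈ E \ stepSet w E) :
    ∃ f, locMaxIn w E f ∧ shareEndpoint f e ∧ w e ≤ w f := by
  obtain ⟨f, hf, hfe⟩ : ∃ f, locMaxIn w E f ∧ shareEndpoint f e := by
    by_contra h
    exact he.2 ⟨he.1, h⟩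
  refine ⟨f, hf, hfe, ?_⟩
  rcases eq_or_ne e f with rfl | hne
  · exact le_rfl
  · exact (hf.2 e he.1 hne hfe).le

end LocalMax

section Algorithm

variable {V : Type*} {G : SimpleGraph V} {w : Sym2 V → ℝ}

theorem Eseq_subset_edgeSet (i : ℕ) : Eseq G w i ⊆ G.edgeSet := by
  induction i with
  | zero => exact subset_rfl
  | succ n ih => exact stepSet_subset.trans ih

theorem iUnion_Mi_subset_edgeSet : (⋃ i, Mi G w i) ⊆ G.edgeSet :=
  Set.iUnion_subset fun i _ he => Eseq_subset_edgeSet i he.1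

theorem exists_Eseq_eq_empty (hfin : G.edgeSet.Finite) (hinj : G.edgeSet.InjOn w) :
    ∃ n, Eseq G w n = ∅ := by
  by_contra! hne
  have hfin' (i : ℕ) : (Eseq G w i).Finite := hfin.subset (Eseq_subset_edgeSet i)
  have hcard (i : ℕ) : (Eseq G w i).ncard + i ≤ (Eseq G w 0).ncard := by
    induction i with
    | zero => rfl
    | succ n ih =>
      have := Set.ncard_lt_ncard
        (stepSet_ssubset (hfin' n) (hne n) (hinj.mono (Eseq_subset_edgeSet n))) (hfin' n)
      change (stepSet w (Eseq G w n)).ncard + (n + 1) ≤ _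
      omega
  have := hcard ((Eseq G w 0).ncard + 1)
  omega

theorem exists_mem_iUnion_Mi_shareEndpoint_le (hfin : G.edgeSet.Finite)
    (hinj : G.edgeSet.InjOn w) {e : Sym2 V} (he : e ∈ G.edgeSet) :
    ∃ f ∈ ⋃ i, Mi G w i, shareEndpoint f e ∧ w e ≤ w f := by
  obtain ⟨n, hn⟩ := exists_Eseq_eq_empty hfin hinj
  obtain ⟨k, hk, hk'⟩ :=
    Nat.exists_not_and_succ_of_not_zero_of_exists (p := (e ∉ Eseq G w ·)) (not_not.2 he)
      ⟨n, hn ▸ Set.notMem_empty e⟩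
  obtain ⟨f, hf, hfe, hwf⟩ := exists_locMaxIn_le_of_mem_diff_stepSet ⟨not_not.1 hk, hk'⟩
  exact ⟨f, Set.mem_iUnion.2 ⟨k, hf⟩, hfe, hwf⟩

end Algorithm

/-- Let `G` be a finite simple graph with an injective, nonnegative
edge weight function `w`, and let `M = ∪_i M_i` be the output of the iterated local
max algorithm (run until no edges remain). Then `M` is a `1/2`-approximation of the
maximum weight matching: for every matching `M'` of `G`,
`Σ_{e ∈ M'} w e ≤ 2 · Σ_{f ∈ M} w f`. -/
theorem stmt13 {V : Type*} [Fintype V] (G : SimpleGraph V) (w : Sym2 V → ℝ)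
    (hinj : Set.InjOn w G.edgeSet) (hw : ∀ e ∈ G.edgeSet, 0 ≤ w e) :
    ∀ M' : Finset (Sym2 V), ↑M' ⊆ G.edgeSet →
      (∀ e ∈ M', ∀ f ∈ M', e ≠ f → ¬ shareEndpoint e f) →
      ∑ e ∈ M', w e ≤ 2 * ∑ᶠ f ∈ ⋃ i, Mi G w i, w f := by
  classical
  intro M' hM' hmatch
  have hMfin : (⋃ i, Mi G w i).Finite := G.edgeSet.toFinite.subset iUnion_Mi_subset_edgeSet
  choose! φ hφM hφshare hφle using fun e (he : e ∈ M') =>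
    exists_mem_iUnion_Mi_shareEndpoint_le G.edgeSet.toFinite hinj (hM' he)
  rw [finsum_mem_eq_finite_toFinset_sum _ hMfin]
  refine sum_le_mul_sum_of_card_fiber_le (n := 2) (fun e he => hMfin.mem_toFinset.2 (hφM e he))
    hφle (fun f _ => ?_) (fun f hf => hw f (iUnion_Mi_subset_edgeSet (hMfin.mem_toFinset.1 hf)))
  refine card_le_two_of_forall_shareEndpoint (fun e he e' he' hne => ?_) f fun e he => ?_
  · exact hmatch e (mem_filter.1 he).1 e' (mem_filter.1 he').1 hne
  · obtain ⟨heM, rfl⟩ := mem_filter.1 he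
    exact hφshare e heM
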